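/- arXiv:1503.00408 — 3 statements merged into one kernel-verified Lean document; each statement's English description precedes it below -/
import Mathlib

section
/- Let (W,S) be a Coxeter system with length function l, and let u, v, w ∈ W satisfy l(uv) = l(u) + l(v) and l(uw) = l(u) + l(w). Then uv ≤ uw in the Bruhat order if and only if v ≤ w in the Bruhat order. -/
/-- The Bruhat order on a Coxeter group: `u ≤ w` iff some reduced word for `w`
has a subword whose product is `u`. -/
def CoxeterSystem.bruhatLE {B W : Type*} [Group W] {M : CoxeterMatrix B}
    (cs : CoxeterSystem M W) (u w : W) : Prop :=
  ∃ ω : List B, cs.IsReduced ω ∧ cs.wordProd ω = w ∧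
    ∃ ω' : List B, ω'.Sublist ω ∧ cs.wordProd ω' = u

/-!
Besides the subword order `bruhatLE` one has the chain order, generated by `y * t < y` for
reflections `t` with `ℓ (y * t) < ℓ y`. The two agree because of the strong exchange
property: if `ℓ (π ω * t) < ℓ (π ω)` then `t` occurs in the right inversion sequence of `ω`.
It comes from Tits' representation of `W` on `W × ZMod 2`, in which `π ω` sends `(t, a)` to
`(π ω * t * (π ω)⁻¹, a + #{occurrences of t in ris ω})`; since this depends only on `π ω`, so
does the parity of that count. Strong exchange makes everything chain-below `w` a subword
product of every word for `w`; conversely, the lifting property makes subwords of reduced words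
chain-below.

Cancellation then reduces to one simple reflection `s` with `v < s v ≤ s w`. For `β` reduced
for `w`, a subword of `s β` with product `s v` either omits the leading `s`, and then
`v < s v ≤ w`, or keeps it, and then its tail exhibits `v ≤ w`.
-/

open List

namespace CoxeterSystem

variable {B W : Type*} [Group W] {M : CoxeterMatrix B} (cs : CoxeterSystem M W)

local prefix:100 "s " => cs.simple
local prefix:100 "π " => cs.wordProd
local prefix:100 "ℓ " => cs.length
local prefix:100 "ris " => cs.rightInvSeq

theorem prod_map_alternatingWord_two_mul {G : Type*} [Monoid G] (f : B → G) (i i' : B) (m : ℕ) :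
    ((alternatingWord i i' (2 * m)).map f).prod = (f i * f i') ^ m := by
  induction m with
  | zero => simp [alternatingWord]
  | succ m ih =>
    rw [show 2 * (m + 1) = 2 * m + 1 + 1 by ring, alternatingWord_succ', alternatingWord_succ',
      if_neg (by simp [parity_simps]), if_pos (by simp), map_cons, map_cons, prod_cons, prod_cons,
      ih, pow_succ', mul_assoc]

theorem rightInvSeq_alternatingWord (i i' : B) (n : ℕ) :
    ris (alternatingWord i i' n) = ((range n).map fun k ↦ s i' * (s i * s i') ^ k).reverse := by
  induction n generalizing i i' with
  | zero => rfl
  | succ n ih =>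
    rw [alternatingWord_succ, rightInvSeq_concat, ih, range_succ_eq_map]
    simp only [map_reverse, map_map, map_cons, reverse_cons, concat_eq_append, pow_zero, mul_one]
    congr 3
    funext k
    simp only [Function.comp_apply, MulAut.conj_apply, inv_simple]
    rw [← mul_pow_mul, pow_succ]
    simp only [mul_assoc]

section SignRepresentation

variable [DecidableEq W]

theorem even_count_rightInvSeq_alternatingWord (i i' : B) (t : W) :
    Even ((ris (alternatingWord i i' (2 * M i i'))).count t) := by
  have hperiod : (fun k ↦ s i' * (s i * s i') ^ k) ∘ (M i i' + ·) =
      fun k ↦ s i' * (s i * s i') ^ k := by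
    funext k
    simp [pow_add, simple_mul_simple_pow]
  rw [rightInvSeq_alternatingWord, count_reverse, two_mul, range_add, map_append, map_map,
    hperiod, count_append]
  exact ⟨_, rfl⟩

def simpleSignPerm (i : B) : Equiv.Perm (W × ZMod 2) :=
  Function.Involutive.toPerm (fun p ↦ (s i * p.1 * s i, p.2 + if p.1 = s i then 1 else 0)) <| by
    rintro ⟨t, a⟩
    have hconj : s i * t * s i = s i ↔ t = s i := by
      constructor
      · intro h
        simpa [mul_assoc] using congrArg (s i * · * s i) h
      · rintro rfl
        simp
    ext
    · simp [← mul_assoc]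
    · by_cases h : t = s i <;> simp [hconj, h, add_assoc, CharTwo.add_self_eq_zero]

theorem simpleSignPerm_apply (i : B) (p : W × ZMod 2) :
    cs.simpleSignPerm i p = (s i * p.1 * s i, p.2 + if p.1 = s i then 1 else 0) :=
  rfl

theorem prod_map_simpleSignPerm_apply (ω : List B) (t : W) (a : ZMod 2) :
    (ω.map cs.simpleSignPerm).prod (t, a) = (π ω * t * (π ω)⁻¹, a + (ris ω).count t) := by
  induction ω with
  | nil => simp
  | cons i ω ih =>
    have hconj : π ω * t * (π ω)⁻¹ = s i ↔ (π ω)⁻¹ * s i * π ω = t := by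
      constructor
      · rintro h
        rw [← h]
        group
      · rintro rfl
        group
    rw [map_cons, prod_cons, Equiv.Perm.mul_apply, ih, simpleSignPerm_apply, rightInvSeq,
      count_cons]
    simp only [beq_iff_eq, hconj]
    ext
    · simp only [wordProd_cons, mul_inv_rev, inv_simple]
      group
    · split_ifs <;> push_cast <;> ring

theorem isLiftable_simpleSignPerm : M.IsLiftable cs.simpleSignPerm := by
  intro i i'
  ext ⟨t, a⟩ : 1
  rw [← prod_map_alternatingWord_two_mul, prod_map_simpleSignPerm_apply,
    (ZMod.natCast_eq_zero_iff_even).mpr (cs.even_count_rightInvSeq_alternatingWord i i' t)]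
  simp [prod_alternatingWord_eq_mul_pow, simple_mul_simple_pow]

def signRep : W →* Equiv.Perm (W × ZMod 2) :=
  cs.lift ⟨cs.simpleSignPerm, cs.isLiftable_simpleSignPerm⟩

theorem signRep_wordProd_apply (ω : List B) (t : W) (a : ZMod 2) :
    cs.signRep (π ω) (t, a) = (π ω * t * (π ω)⁻¹, a + (ris ω).count t) := by
  rw [← prod_map_simpleSignPerm_apply, signRep, wordProd, map_list_prod, map_map]
  congr 3
  funext i
  exact cs.lift_apply_simple cs.isLiftable_simpleSignPerm i

theorem signRep_apply_self {t : W} (ht : cs.IsReflection t) (a : ZMod 2) :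
    cs.signRep t (t, a) = (t, a + 1) := by
  obtain ⟨w, i, rfl⟩ := ht
  obtain ⟨ω, rfl⟩ := cs.wordProd_surjective w
  have hω (b : ZMod 2) := cs.signRep_wordProd_apply ω (s i) b
  have hsi (b : ZMod 2) : cs.signRep (s i) (s i, b) = (s i, b + 1) := by
    simpa using cs.signRep_wordProd_apply [i] (s i) b
  have hinv : (cs.signRep (π ω))⁻¹ (π ω * s i * (π ω)⁻¹, a) = (s i, a - (ris ω).count (s i)) := by
    rw [Equiv.Perm.inv_eq_iff_eq, hω, sub_add_cancel]
  rw [map_mul, map_mul, map_inv, Equiv.Perm.mul_apply, Equiv.Perm.mul_apply, hinv, hsi, hω]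
  congr 1
  ring

end SignRepresentation

theorem mem_rightInvSeq_of_isRightInversion {ω : List B} {t : W}
    (h : cs.IsRightInversion (π ω) t) : t ∈ ris ω := by
  classical
  by_contra hmem
  obtain ⟨ρ, hρ, hρω⟩ := cs.exists_isReduced (π ω * t)
  have hsign : ((ris ρ).count t : ZMod 2) = 1 := by
    have h₀ := cs.signRep_wordProd_apply ρ t 0
    rw [← hρω, map_mul, Equiv.Perm.mul_apply, cs.signRep_apply_self h.1,
      signRep_wordProd_apply, count_eq_zero_of_not_mem hmem] at h₀
    simpa using (congrArg Prod.snd h₀).symm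
  have hmemρ : t ∈ ris ρ := by
    by_contra h'
    rw [count_eq_zero_of_not_mem h'] at hsign
    exact zero_ne_one hsign
  have hlt := (cs.isRightInversion_of_mem_rightInvSeq hρ hmemρ).2
  rw [← hρω, mul_assoc, h.1.mul_self, mul_one] at hlt
  exact h.2.not_gt hlt

def BruhatStep (x y : W) : Prop := ∃ t, cs.IsRightInversion y t ∧ y * t = x

def BruhatChain : W → W → Prop := Relation.ReflTransGen cs.BruhatStep

theorem bruhatStep_simple_mul_of_isLeftDescent {y : W} {i : B} (h : cs.IsLeftDescent y i) :
    cs.BruhatStep (s i * y) y :=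
  ⟨y⁻¹ * s i * y, ⟨⟨y⁻¹, i, by rw [inv_inv]⟩, by simpa [mul_assoc, IsLeftDescent] using h⟩, by group⟩

theorem bruhatStep_simple_mul_of_not_isLeftDescent {x : W} {i : B}
    (h : ¬cs.IsLeftDescent x i) : cs.BruhatStep x (s i * x) := by
  have := cs.bruhatStep_simple_mul_of_isLeftDescent (y := s i * x)
    (by rwa [isLeftDescent_iff_not_isLeftDescent_mul, simple_mul_simple_cancel_left])
  rwa [simple_mul_simple_cancel_left] at this

theorem bruhatChain_simple_mul_of_bruhatStep {c y : W} {i : B} (hcy : cs.BruhatStep c y)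
    (hy : cs.IsLeftDescent y i) : cs.BruhatChain (s i * c) y := by
  obtain ⟨t, ht, rfl⟩ := hcy
  obtain ⟨β, hβ, hβy⟩ := cs.exists_isReduced (s i * y)
  have hy' : y = π (i :: β) := by rw [wordProd_cons, ← hβy, simple_mul_simple_cancel_left]
  have hmem := cs.mem_rightInvSeq_of_isRightInversion (hy' ▸ ht)
  rw [rightInvSeq, mem_cons] at hmem
  rcases hmem with rfl | hmem
  · have hc : s i * (y * ((π β)⁻¹ * s i * π β)) = y := by
      rw [hy', wordProd_cons]
      simp [mul_assoc, simple_mul_simple_cancel_left]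
    rw [hc]
    exact .refl
  · have hstep : cs.BruhatStep (s i * (y * t)) (s i * y) := by
      refine ⟨t, ?_, by rw [mul_assoc]⟩
      rw [hβy]
      exact cs.isRightInversion_of_mem_rightInvSeq hβ hmem
    exact .tail (.single hstep) (cs.bruhatStep_simple_mul_of_isLeftDescent hy)

variable {cs} in
theorem BruhatChain.lifting {x y : W} (h : cs.BruhatChain x y) (i : B) :
    (¬cs.IsLeftDescent y i → cs.BruhatChain (s i * x) (s i * y)) ∧
      (cs.IsLeftDescent y i → cs.BruhatChain (s i * x) y) := by
  induction h generalizing i with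
  | refl => exact ⟨fun _ ↦ .refl, fun hx ↦ .single (cs.bruhatStep_simple_mul_of_isLeftDescent hx)⟩
  | @tail c y hxc hcy ih =>
    obtain ⟨t, ht, rfl⟩ := hcy
    have hstep : cs.BruhatStep (y * t) y := ⟨t, ht, rfl⟩
    by_cases hc : cs.IsLeftDescent (y * t) i
    · have hxc' := (ih i).2 hc
      exact ⟨fun hy ↦ (hxc'.tail hstep).tail (cs.bruhatStep_simple_mul_of_not_isLeftDescent hy),
        fun _ ↦ hxc'.tail hstep⟩
    · have hxc' := (ih i).1 hc
      refine ⟨fun hy ↦ hxc'.tail ⟨t, ⟨ht.1, ?_⟩, mul_assoc _ _ _⟩,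
        fun hy ↦ hxc'.trans (cs.bruhatChain_simple_mul_of_bruhatStep hstep hy)⟩
      have h₁ := cs.not_isLeftDescent_iff.mp hc
      have h₂ := cs.not_isLeftDescent_iff.mp hy
      have h₃ := ht.2
      rw [mul_assoc]
      omega

variable {cs} in
theorem IsReduced.not_isLeftDescent_wordProd {i : B} {ω : List B} (h : cs.IsReduced (i :: ω)) :
    ¬cs.IsLeftDescent (π ω) i := by
  have h₁ : ℓ (s i * π ω) = ω.length + 1 := by rw [← wordProd_cons]; exact h
  have h₂ := cs.length_wordProd_le ω
  rw [IsLeftDescent]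
  omega

theorem bruhatChain_wordProd_of_sublist {ω' ω : List B} (hsub : ω' <+ ω) (hω : cs.IsReduced ω) :
    cs.BruhatChain (π ω') (π ω) := by
  induction hsub with
  | slnil => exact .refl
  | @cons l₁ l₂ i _ ih =>
    rw [wordProd_cons]
    exact .tail (ih (by simpa using hω.drop 1))
      (cs.bruhatStep_simple_mul_of_not_isLeftDescent hω.not_isLeftDescent_wordProd)
  | @cons_cons l₁ l₂ i _ ih =>
    rw [wordProd_cons, wordProd_cons]
    exact ((ih (by simpa using hω.drop 1)).lifting i).1 hω.not_isLeftDescent_wordProd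

variable {cs} in
theorem BruhatChain.exists_sublist {x : W} {ω : List B} (h : cs.BruhatChain x (π ω)) :
    ∃ δ, δ <+ ω ∧ π δ = x := by
  generalize hw : π ω = w at h
  induction h generalizing ω with
  | refl => exact ⟨ω, .refl ω, hw⟩
  | tail _ hcw ih =>
    obtain ⟨t, ht, rfl⟩ := hcw
    obtain ⟨j, hj, rfl⟩ := mem_iff_getElem.mp (cs.mem_rightInvSeq_of_isRightInversion (hw ▸ ht))
    have hdel := cs.wordProd_mul_getD_rightInvSeq ω j
    rw [getD_eq_getElem _ _ hj, hw] at hdel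
    obtain ⟨δ, hδ, rfl⟩ := ih hdel.symm
    exact ⟨δ, hδ.trans (eraseIdx_sublist ω j), rfl⟩

theorem bruhatLE_iff_bruhatChain {x w : W} : cs.bruhatLE x w ↔ cs.BruhatChain x w := by
  constructor
  · rintro ⟨ω, hω, rfl, ω', hsub, rfl⟩
    exact cs.bruhatChain_wordProd_of_sublist hsub hω
  · intro h
    obtain ⟨ω, hω, rfl⟩ := cs.exists_isReduced w
    obtain ⟨δ, hδ, hδx⟩ := h.exists_sublist
    exact ⟨ω, hω, rfl, δ, hδ, hδx⟩

variable {cs} in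
theorem BruhatChain.of_simple_mul {v w : W} {i : B} (hv : ¬cs.IsLeftDescent v i)
    (h : cs.BruhatChain (s i * v) (s i * w)) : cs.BruhatChain v w := by
  obtain ⟨β, hβ, rfl⟩ := cs.exists_isReduced w
  rw [← wordProd_cons] at h
  obtain ⟨δ, hδ, hδv⟩ := h.exists_sublist
  cases hδ with
  | cons _ hδβ =>
    refine .head (cs.bruhatStep_simple_mul_of_not_isLeftDescent hv) ?_
    rw [← hδv]
    exact cs.bruhatChain_wordProd_of_sublist hδβ hβ
  | cons_cons _ hδβ =>
    rw [wordProd_cons, mul_right_inj] at hδv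
    rw [← hδv]
    exact cs.bruhatChain_wordProd_of_sublist hδβ hβ

variable {cs} in
theorem BruhatChain.of_wordProd_mul {α : List B} {v w : W} (hv : ℓ (π α * v) = α.length + ℓ v)
    (h : cs.BruhatChain (π α * v) (π α * w)) : cs.BruhatChain v w := by
  induction α with
  | nil => simpa using h
  | cons i α ih =>
    rw [wordProd_cons, mul_assoc, length_cons] at hv
    rw [wordProd_cons, mul_assoc, mul_assoc] at h
    have h₁ := cs.length_mul_le (π α) v
    have h₂ := cs.length_wordProd_le α
    have h₃ := cs.length_simple_mul (π α * v) i
    have hasc : ¬cs.IsLeftDescent (π α * v) i := by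
      rw [not_isLeftDescent_iff]
      omega
    exact ih (by omega) (h.of_simple_mul hasc)

variable {cs} in
theorem BruhatChain.of_mul_left {u v w : W} (hv : ℓ (u * v) = ℓ u + ℓ v)
    (h : cs.BruhatChain (u * v) (u * w)) : cs.BruhatChain v w := by
  obtain ⟨α, hα, rfl⟩ := cs.exists_isReduced u
  exact h.of_wordProd_mul (hα.eq ▸ hv)

theorem bruhatLE_mul_left {u v w : W} (h : cs.bruhatLE v w) (hw : ℓ (u * w) = ℓ u + ℓ w) :
    cs.bruhatLE (u * v) (u * w) := by
  obtain ⟨α, hα, rfl⟩ := cs.exists_isReduced u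
  obtain ⟨ω, hω, rfl, ω', hsub, rfl⟩ := h
  refine ⟨α ++ ω, ?_, cs.wordProd_append α ω, α ++ ω', hsub.append_left α,
    cs.wordProd_append α ω'⟩
  rw [IsReduced, wordProd_append, hw, length_append, hα.eq, hω.eq]

end CoxeterSystem

/-- If `l(uv) = l(u) + l(v)` and `l(uw) = l(u) + l(w)`, then `uv ≤ uw` in the Bruhat
order if and only if `v ≤ w`. -/
theorem bruhat_cancellation {B W : Type*} [Group W] {M : CoxeterMatrix B}
    (cs : CoxeterSystem M W) (u v w : W)
    (hv : cs.length (u * v) = cs.length u + cs.length v)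
    (hw : cs.length (u * w) = cs.length u + cs.length w) :
    cs.bruhatLE (u * v) (u * w) ↔ cs.bruhatLE v w := by
  refine ⟨fun h ↦ ?_, fun h ↦ cs.bruhatLE_mul_left h hw⟩
  rw [cs.bruhatLE_iff_bruhatChain] at h ⊢
  exact h.of_mul_left hv
end

section
/- Let (W,S) be a Coxeter system and J, K ⊆ S. Then D_J is the disjoint union over d ∈ D_{K,J} of the sets D^K_{K ∩ dJd⁻¹} · d, where D_{K,J} = D_K⁻¹ ∩ D_J is the set of minimal length (W_K, W_J) double coset representatives, and D^K_L = W_K ∩ D_L. -/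
/-!
The exchange condition comes from the action of `W` on `W × ZMod 2` in which `s i` conjugates the
first coordinate and flips the second exactly at `s i`: along a word, the second coordinate counts
modulo 2 the occurrences of a reflection in the right inversion sequence, so this parity depends
only on the element. With exchange, an element `d` without left descents in `K` has minimal length
in `W_K d` and satisfies `ℓ (u d) = ℓ u + ℓ d` for `u ∈ W_K`, which makes `w = u d` unique.
Deodhar's lemma (if `ℓ (d s_j) > ℓ d`, then `d s_j = s_k d` with `k ∈ K` or `d s_j` has no left
descent in `K`) then shows that `u d ∈ D_J` exactly when `d ∈ D_J` and `u` has no right descent in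
`K ∩ dJd⁻¹`.
-/

section
variable {B W : Type*} [Group W] {M : CoxeterMatrix B} (cs : CoxeterSystem M W)

/-- The set of minimal length left coset representatives of `W_J`. -/
def DLeft (J : Set B) : Set W :=
  {w | ∀ j ∈ J, cs.length (w * cs.simple j) > cs.length w}

/-- The set of minimal length right coset representatives of `W_K` (i.e. `D_K⁻¹`). -/
def DRight (K : Set B) : Set W :=
  {w | ∀ i ∈ K, cs.length (cs.simple i * w) > cs.length w}

/-- The standard parabolic subgroup `W_J`, as a set. -/
def WPar (J : Set B) : Set W := (Subgroup.closure (cs.simple '' J) : Subgroup W)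

/-- `K ∩ dJd⁻¹`, as a subset of the index set `B`. -/
def conjInter (J K : Set B) (d : W) : Set B :=
  {i ∈ K | ∃ j ∈ J, cs.simple i = d * cs.simple j * d⁻¹}

namespace CoxeterSystem

open List

local prefix:100 "s " => cs.simple
local prefix:100 "π " => cs.wordProd
local prefix:100 "ℓ " => cs.length
local prefix:100 "ris " => cs.rightInvSeq
local prefix:100 "lis " => cs.leftInvSeq

def pairWord (i j : B) : ℕ → List B
  | 0 => []
  | m + 1 => i :: j :: pairWord i j m

theorem wordProd_pairWord (i j : B) (m : ℕ) : π (pairWord i j m) = (s i * s j) ^ m := by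
  induction m with
  | zero => simp [pairWord]
  | succ m ih => rw [pairWord, wordProd_cons, wordProd_cons, ih, pow_succ', mul_assoc]

theorem rightInvSeq_pairWord (i j : B) (m : ℕ) :
    ris (pairWord i j m) = ((range (2 * m)).map fun k => (s j * s i) ^ k * s j).reverse := by
  have hsemi : ∀ n, s j * (s i * s j) ^ n = (s j * s i) ^ n * s j := fun n =>
    SemiconjBy.pow_right (by simp [SemiconjBy, mul_assoc]) n
  have hinv : ∀ n, ((s i * s j) ^ n)⁻¹ = (s j * s i) ^ n := by simp [← inv_pow, mul_inv_rev]
  induction m with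
  | zero => simp [pairWord]
  | succ m ih =>
    have e₁ : (π pairWord i j m)⁻¹ * s j * π pairWord i j m = (s j * s i) ^ (2 * m) * s j := by
      rw [wordProd_pairWord, hinv, mul_assoc, hsemi, two_mul, pow_add, mul_assoc]
    have e₂ : (π (j :: pairWord i j m))⁻¹ * s i * π (j :: pairWord i j m) =
        (s j * s i) ^ (2 * m + 1) * s j := by
      rw [wordProd_cons, wordProd_pairWord, mul_inv_rev, hinv, inv_simple, hsemi,
        show 2 * m + 1 = m + 1 + m by ring, pow_add, pow_succ]
      simp only [mul_assoc]
    rw [pairWord, rightInvSeq, rightInvSeq, ih, e₁, e₂, mul_add_one 2 m, range_succ, range_succ]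
    simp

section ReflectionRepresentation

variable [DecidableEq W]

theorem even_count_rightInvSeq_pairWord (i j : B) (t : W) :
    Even ((ris (pairWord i j (M i j))).count t) := by
  have hper : ∀ k, (s j * s i) ^ (M i j + k) * s j = (s j * s i) ^ k * s j := fun k => by
    rw [pow_add, simple_mul_simple_pow', one_mul]
  rw [rightInvSeq_pairWord, count_reverse, two_mul, range_add, map_append, map_map,
    Function.comp_def]
  simp only [hper, count_append]
  exact ⟨_, rfl⟩

-- Björner–Brenti's `π_i` (§1.4), acting on `W × ZMod 2` instead of `T × {±1}`.
def reflectionPerm (i : B) : Equiv.Perm (W × ZMod 2) :=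
  Equiv.prodShear (MulAut.conj (s i)).toEquiv fun t => Equiv.addRight (if t = s i then 1 else 0)

theorem prod_map_reflectionPerm_apply (ω : List B) (t : W) (e : ZMod 2) :
    (ω.map cs.reflectionPerm).prod (t, e) = (π ω * t * (π ω)⁻¹, e + (ris ω).count t) := by
  induction ω generalizing t e with
  | nil => simp
  | cons i ω ih =>
    have hconj : π ω * t * (π ω)⁻¹ = s i ↔ (π ω)⁻¹ * s i * π ω = t := by
      constructor <;> intro h <;> rw [← h] <;> group
    simp only [map_cons, prod_cons, Equiv.Perm.mul_apply, ih, reflectionPerm,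
      Equiv.prodShear_apply, MulEquiv.toEquiv_eq_coe, MulEquiv.coe_toEquiv, MulAut.conj_apply,
      inv_simple, Equiv.coe_addRight, rightInvSeq, count_cons, beq_iff_eq, hconj, wordProd_cons,
      mul_inv_rev, Prod.mk.injEq]
    refine ⟨by group, ?_⟩
    split_ifs <;> push_cast <;> ring

theorem isLiftable_reflectionPerm : M.IsLiftable cs.reflectionPerm := by
  intro i j
  have hpow : (cs.reflectionPerm i * cs.reflectionPerm j) ^ M i j =
      ((pairWord i j (M i j)).map cs.reflectionPerm).prod := by
    induction M i j with
    | zero => simp [pairWord]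
    | succ m ih => rw [pow_succ', ih, pairWord, map_cons, map_cons, prod_cons, prod_cons, mul_assoc]
  ext ⟨t, e⟩ : 1
  obtain ⟨c, hc⟩ := cs.even_count_rightInvSeq_pairWord i j t
  rw [hpow, prod_map_reflectionPerm_apply, wordProd_pairWord, simple_mul_simple_pow, hc]
  simp [← two_mul, show (2 : ZMod 2) = 0 from rfl]

def reflectionRep : W →* Equiv.Perm (W × ZMod 2) := cs.lift ⟨_, cs.isLiftable_reflectionPerm⟩

theorem reflectionRep_wordProd (ω : List B) :
    cs.reflectionRep (π ω) = (ω.map cs.reflectionPerm).prod := by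
  rw [wordProd, map_list_prod, map_map]
  congr 2
  ext i : 1
  exact cs.lift_apply_simple cs.isLiftable_reflectionPerm i

theorem cast_count_rightInvSeq_eq_of_wordProd_eq {ω ω' : List B} (h : π ω = π ω') (t : W) :
    ((ris ω).count t : ZMod 2) = (ris ω').count t := by
  have := congrArg (fun w => (cs.reflectionRep w (t, 0)).2) h
  simpa [reflectionRep_wordProd, prod_map_reflectionPerm_apply] using this

end ReflectionRepresentation

theorem simple_mem_rightInvSeq_of_isRightDescent {ω : List B} {i : B}
    (h : cs.IsRightDescent (π ω) i) : s i ∈ ris ω := by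
  classical
  by_contra hω
  obtain ⟨ω', hω', hπ⟩ := cs.exists_isReduced (π ω * s i)
  have hω' : s i ∉ ris ω' := fun hmem => by
    have := (cs.isRightInversion_of_mem_rightInvSeq hω' hmem).2
    rw [← hπ, simple_mul_simple_cancel_right] at this
    exact lt_asymm h this
  have hword : π ω = π (ω'.concat i) := by
    rw [wordProd_concat, ← hπ, simple_mul_simple_cancel_right]
  have hcount : (ris (ω'.concat i)).count (s i) = 1 := by
    have hfix : MulAut.conj (s i) (s i) = s i := by simp
    rw [rightInvSeq_concat, concat_eq_append, count_append, count_singleton_self]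
    nth_rw 1 [← hfix]
    rw [count_map_of_injective _ _ (MulAut.conj (s i)).injective, count_eq_zero.2 hω']
  have := cs.cast_count_rightInvSeq_eq_of_wordProd_eq hword (s i)
  rw [hcount, count_eq_zero.2 hω] at this
  exact zero_ne_one this

theorem simple_mem_leftInvSeq_of_isLeftDescent {ω : List B} {i : B}
    (h : cs.IsLeftDescent (π ω) i) : s i ∈ lis ω := by
  have h' : cs.IsRightDescent (π ω.reverse) i := by
    rwa [wordProd_reverse, isRightDescent_inv_iff]
  simpa [rightInvSeq_reverse] using cs.simple_mem_rightInvSeq_of_isRightDescent h'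

theorem exists_eraseIdx_of_isLeftDescent {ω : List B} {i : B} (h : cs.IsLeftDescent (π ω) i) :
    ∃ j < ω.length, s i * π ω = π (ω.eraseIdx j) := by
  obtain ⟨j, hj, hget⟩ := getElem_of_mem (cs.simple_mem_leftInvSeq_of_isLeftDescent h)
  refine ⟨j, by simpa using hj, ?_⟩
  rw [← getD_leftInvSeq_mul_wordProd, getD_eq_getElem _ _ hj, hget]

theorem length_wordProd_eraseIdx_lt {ω : List B} (hω : cs.IsReduced ω) {j : ℕ}
    (hj : j < ω.length) : ℓ (π (ω.eraseIdx j)) < ℓ (π ω) :=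
  calc ℓ (π (ω.eraseIdx j)) ≤ (ω.eraseIdx j).length := cs.length_wordProd_le _
    _ < ω.length := by rw [length_eraseIdx_of_lt hj]; omega
    _ = ℓ (π ω) := hω.symm

theorem exists_isReduced_sublist (ω : List B) :
    ∃ ω', cs.IsReduced ω' ∧ ω' <+ ω ∧ π ω' = π ω := by
  induction ω with
  | nil => exact ⟨[], by simp [IsReduced], .slnil, rfl⟩
  | cons i ω ih =>
    obtain ⟨ω', hred, hsub, hπ⟩ := ih
    by_cases hdesc : cs.IsLeftDescent (π ω') i
    · obtain ⟨j, hj, heq⟩ := cs.exists_eraseIdx_of_isLeftDescent hdesc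
      refine ⟨ω'.eraseIdx j, ?_, ((eraseIdx_sublist ω' j).trans hsub).cons i,
        by rw [wordProd_cons, ← hπ, heq]⟩
      have := cs.isLeftDescent_iff.1 hdesc
      rw [heq, hred] at this
      rw [IsReduced, length_eraseIdx_of_lt hj]
      omega
    · refine ⟨i :: ω', ?_, hsub.cons_cons i, by rw [wordProd_cons, wordProd_cons, hπ]⟩
      rw [IsReduced, wordProd_cons, cs.not_isLeftDescent_iff.1 hdesc, hred, length_cons]

variable {K : Set B}

theorem simple_mem_WPar {k : B} (hk : k ∈ K) : s k ∈ WPar cs K :=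
  Subgroup.subset_closure ⟨k, hk, rfl⟩

theorem exists_isReduced_of_mem_WPar {u : W} (hu : u ∈ WPar cs K) :
    ∃ ω, cs.IsReduced ω ∧ (∀ b ∈ ω, b ∈ K) ∧ π ω = u := by
  obtain ⟨ω, hωK, rfl⟩ : ∃ ω : List B, (∀ b ∈ ω, b ∈ K) ∧ π ω = u := by
    induction hu using Subgroup.closure_induction with
    | mem _ h =>
      obtain ⟨i, hi, rfl⟩ := h
      exact ⟨[i], by simpa using hi, wordProd_singleton cs i⟩
    | one => exact ⟨[], by simp, wordProd_nil cs⟩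
    | mul _ _ _ _ h₁ h₂ =>
      obtain ⟨ω₁, hω₁, rfl⟩ := h₁
      obtain ⟨ω₂, hω₂, rfl⟩ := h₂
      exact ⟨ω₁ ++ ω₂, by simpa [or_imp, forall_and] using ⟨hω₁, hω₂⟩, wordProd_append cs ω₁ ω₂⟩
    | inv _ _ h =>
      obtain ⟨ω, hω, rfl⟩ := h
      exact ⟨ω.reverse, by simpa using hω, wordProd_reverse cs ω⟩
  obtain ⟨ω', hred, hsub, hπ⟩ := cs.exists_isReduced_sublist ω
  exact ⟨ω', hred, fun b hb => hωK b (hsub.subset hb), hπ⟩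

theorem exists_eq_simple_mul_of_mem_WPar {u : W} (hu : u ∈ WPar cs K) (hne : u ≠ 1) :
    ∃ k ∈ K, ∃ u' ∈ WPar cs K, u = s k * u' ∧ ℓ u' + 1 = ℓ u := by
  obtain ⟨_ | ⟨k, ω⟩, hred, hωK, rfl⟩ := cs.exists_isReduced_of_mem_WPar hu
  · exact absurd (wordProd_nil cs) hne
  have hk : k ∈ K := hωK k mem_cons_self
  have hω : π ω = s k * π (k :: ω) := by rw [wordProd_cons, simple_mul_simple_cancel_left]
  refine ⟨k, hk, π ω, hω ▸ Subgroup.mul_mem _ (cs.simple_mem_WPar hk) hu, wordProd_cons .., ?_⟩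
  rw [hred, (by simpa using hred.drop 1 : cs.IsReduced ω), length_cons]

theorem exists_mul_mem_DRight (K : Set B) (w : W) :
    ∃ u ∈ WPar cs K, ∃ d ∈ DRight cs K, w = u * d ∧ ℓ d ≤ ℓ w := by
  induction hn : ℓ w using Nat.strong_induction_on generalizing w with
  | _ n ih =>
  subst hn
  by_cases hw : w ∈ DRight cs K
  · exact ⟨1, Subgroup.one_mem _, w, hw, (one_mul w).symm, le_rfl⟩
  obtain ⟨i, hi, hle⟩ : ∃ i ∈ K, ℓ (s i * w) ≤ ℓ w := by simpa [DRight] using hw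
  have hlt : ℓ (s i * w) < ℓ w := lt_of_le_of_ne hle (cs.length_simple_mul_ne w i)
  obtain ⟨u, hu, d, hd, heq, hdle⟩ := ih _ hlt (s i * w) rfl
  refine ⟨s i * u, Subgroup.mul_mem _ (cs.simple_mem_WPar hi) hu, d, hd, ?_, by omega⟩
  rw [mul_assoc, ← heq, simple_mul_simple_cancel_left]

theorem length_mul_of_forall_length_le {d u : W} (hmin : ∀ v ∈ WPar cs K, ℓ d ≤ ℓ (v * d))
    (hu : u ∈ WPar cs K) : ℓ (u * d) = ℓ u + ℓ d := by
  induction hn : ℓ u using Nat.strong_induction_on generalizing u with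
  | _ n ih =>
  subst hn
  rcases eq_or_ne u 1 with rfl | hne
  · simp
  obtain ⟨k, hk, u', hu', rfl, hlen⟩ := cs.exists_eq_simple_mul_of_mem_WPar hu hne
  have ih' : ℓ (u' * d) = ℓ u' + ℓ d := ih _ (by omega) hu' rfl
  suffices ¬ cs.IsLeftDescent (u' * d) k by
    rw [mul_assoc, cs.not_isLeftDescent_iff.1 this, ih', ← hlen]
    ring
  -- Exchange in `τ ++ δ`: a deletion in `τ` shortens `s k * u'`, one in `δ` gives a shorter
  -- element of `W_K d`.
  intro hdesc
  obtain ⟨τ, hτ, rfl⟩ := cs.exists_isReduced u'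
  obtain ⟨δ, hδ, rfl⟩ := cs.exists_isReduced d
  rw [← wordProd_append] at hdesc
  obtain ⟨p, hp, heq⟩ := cs.exists_eraseIdx_of_isLeftDescent hdesc
  rcases lt_or_ge p τ.length with hpτ | hpτ
  · rw [eraseIdx_append_of_lt_length hpτ, wordProd_append, wordProd_append, ← mul_assoc,
      mul_left_inj] at heq
    have := cs.length_wordProd_eraseIdx_lt hτ hpτ
    rw [← heq] at this
    omega
  · rw [eraseIdx_append_of_length_le hpτ, wordProd_append, wordProd_append] at heq
    have hconj : (π τ)⁻¹ * s k * π τ * π δ = π (δ.eraseIdx (p - τ.length)) := by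
      rw [mul_assoc, mul_assoc, heq, inv_mul_cancel_left]
    have := hmin _ (Subgroup.mul_mem _ (Subgroup.mul_mem _ (Subgroup.inv_mem _ hu')
      (cs.simple_mem_WPar hk)) hu')
    rw [hconj] at this
    have := cs.length_wordProd_eraseIdx_lt hδ (j := p - τ.length) (by simp at hp; omega)
    omega

theorem eq_one_of_mul_mem_DRight {d x : W} (hadd : ∀ u ∈ WPar cs K, ℓ (u * d) = ℓ u + ℓ d)
    (hx : x ∈ WPar cs K) (hxd : x * d ∈ DRight cs K) : x = 1 := by
  by_contra hne
  obtain ⟨k, hk, x', hx', rfl, hlen⟩ := cs.exists_eq_simple_mul_of_mem_WPar hx hne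
  have hdesc := hxd k hk
  rw [mul_assoc, simple_mul_simple_cancel_left, ← mul_assoc, hadd _ hx, hadd _ hx'] at hdesc
  omega

theorem length_mul_of_mem_DRight {d u : W} (hd : d ∈ DRight cs K) (hu : u ∈ WPar cs K) :
    ℓ (u * d) = ℓ u + ℓ d := by
  induction hn : ℓ d using Nat.strong_induction_on generalizing d u with
  | _ n ih =>
  subst hn
  -- A shorter `v * d = u₁ * d₁` would give `d = (v⁻¹ * u₁) * d₁` with `d₁` shorter than `d`,
  -- and uniqueness of the factorization over `d₁` forces `d = d₁`.
  refine cs.length_mul_of_forall_length_le (fun v hv => ?_) hu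
  by_contra! hlt
  obtain ⟨u₁, hu₁, d₁, hd₁, hvd, hle⟩ := cs.exists_mul_mem_DRight K (v * d)
  have hd_eq : (v⁻¹ * u₁) * d₁ = d := by rw [mul_assoc, ← hvd, inv_mul_cancel_left]
  have hone : v⁻¹ * u₁ = 1 :=
    cs.eq_one_of_mul_mem_DRight (fun u hu => ih _ (by omega) hd₁ hu rfl)
      (Subgroup.mul_mem _ (Subgroup.inv_mem _ hv) hu₁) (hd_eq ▸ hd)
  rw [hone, one_mul] at hd_eq
  rw [hd_eq] at hle
  omega

theorem eq_of_mul_eq_mul_of_mem_DRight {v₁ v₂ d₁ d₂ : W} (hv₁ : v₁ ∈ WPar cs K)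
    (hv₂ : v₂ ∈ WPar cs K) (hd₁ : d₁ ∈ DRight cs K) (hd₂ : d₂ ∈ DRight cs K)
    (h : v₁ * d₁ = v₂ * d₂) : d₁ = d₂ := by
  have hd : (v₂⁻¹ * v₁) * d₁ = d₂ := by rw [mul_assoc, h, inv_mul_cancel_left]
  have hone : v₂⁻¹ * v₁ = 1 :=
    cs.eq_one_of_mul_mem_DRight (fun u hu => cs.length_mul_of_mem_DRight hd₁ hu)
      (Subgroup.mul_mem _ (Subgroup.inv_mem _ hv₂) hv₁) (hd ▸ hd₂)
  rwa [hone, one_mul] at hd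

theorem mul_simple_eq_simple_mul_or_mem_DRight {d : W} {j : B} (hd : d ∈ DRight cs K)
    (hdj : ℓ d < ℓ (d * s j)) : (∃ k ∈ K, d * s j = s k * d) ∨ d * s j ∈ DRight cs K := by
  refine or_iff_not_imp_right.2 fun hnot => ?_
  obtain ⟨k, hk, hle⟩ : ∃ k ∈ K, ℓ (s k * (d * s j)) ≤ ℓ (d * s j) := by
    simpa [DRight] using hnot
  have hdesc : cs.IsLeftDescent (d * s j) k := lt_of_le_of_ne hle (cs.length_simple_mul_ne _ k)
  obtain ⟨δ, hδ, rfl⟩ := cs.exists_isReduced d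
  rw [← wordProd_concat, concat_eq_append] at hdesc
  obtain ⟨p, hp, heq⟩ := cs.exists_eraseIdx_of_isLeftDescent hdesc
  rw [length_append, length_singleton] at hp
  rcases Nat.lt_succ_iff_lt_or_eq.1 hp with hpδ | rfl
  · rw [eraseIdx_append_of_lt_length hpδ, wordProd_append, wordProd_append, ← mul_assoc,
      mul_left_inj] at heq
    have := hd k hk
    rw [heq] at this
    exact absurd (cs.length_wordProd_eraseIdx_lt hδ hpδ) this.not_gt
  · rw [eraseIdx_append_of_length_le le_rfl, Nat.sub_self, eraseIdx_cons_zero, append_nil,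
      wordProd_append, wordProd_singleton, ← mul_assoc] at heq
    exact ⟨k, hk, by rw [eq_mul_inv_of_mul_eq heq, inv_simple]⟩

theorem mem_DLeft_of_mul_mem_DLeft {J : Set B} {u d : W} (hu : u ∈ WPar cs K)
    (hd : d ∈ DRight cs K) (hw : u * d ∈ DLeft cs J) : d ∈ DLeft cs J := by
  intro j hj
  by_contra! hle
  have hlt : ℓ (d * s j) < ℓ d := lt_of_le_of_ne hle (cs.length_mul_simple_ne d j)
  have hw' := hw j hj
  have hle' := cs.length_mul_le u (d * s j)
  rw [← mul_assoc] at hle'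
  rw [cs.length_mul_of_mem_DRight hd hu] at hw'
  omega

theorem mem_DLeft_conjInter_of_mul_mem_DLeft {J : Set B} {u d : W} (hu : u ∈ WPar cs K)
    (hd : d ∈ DRight cs K) (hw : u * d ∈ DLeft cs J) : u ∈ DLeft cs (conjInter cs J K d) := by
  rintro k ⟨hk, j, hj, hkj⟩
  by_contra! hle
  have hlt : ℓ (u * s k) < ℓ u := lt_of_le_of_ne hle (cs.length_mul_simple_ne u k)
  have hmul : u * d * s j = u * s k * d := by rw [hkj]; group
  have := hw j hj
  rw [hmul, cs.length_mul_of_mem_DRight hd hu,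
    cs.length_mul_of_mem_DRight hd (Subgroup.mul_mem _ hu (cs.simple_mem_WPar hk))] at this
  omega

theorem mul_mem_DLeft {J : Set B} {v d : W} (hdK : d ∈ DRight cs K) (hdJ : d ∈ DLeft cs J)
    (hv : v ∈ WPar cs K) (hvd : v ∈ DLeft cs (conjInter cs J K d)) : v * d ∈ DLeft cs J := by
  intro j hj
  rw [cs.length_mul_of_mem_DRight hdK hv]
  rcases cs.mul_simple_eq_simple_mul_or_mem_DRight hdK (hdJ j hj) with ⟨k, hk, heq⟩ | hdj
  · have hvk := hvd k ⟨hk, j, hj, by rw [heq, mul_inv_cancel_right]⟩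
    rw [mul_assoc, heq, ← mul_assoc,
      cs.length_mul_of_mem_DRight hdK (Subgroup.mul_mem _ hv (cs.simple_mem_WPar hk))]
    omega
  · have := hdJ j hj
    rw [mul_assoc, cs.length_mul_of_mem_DRight hdj hv]
    omega

end CoxeterSystem

/-- Mackey decomposition: `D_J` is the disjoint union over `d ∈ D_{K,J}` of the sets
`D^K_{K ∩ dJd⁻¹} · d`, where `D_{K,J} = D_K⁻¹ ∩ D_J` and `D^K_L = W_K ∩ D_L`. -/
theorem DLeft_eq_disjUnion_over_doubleCosetReps (J K : Set B) :
    (DLeft cs J =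
      ⋃ d ∈ DRight cs K ∩ DLeft cs J,
        (fun v => v * d) '' (WPar cs K ∩ DLeft cs (conjInter cs J K d))) ∧
    (∀ d₁ ∈ DRight cs K ∩ DLeft cs J, ∀ d₂ ∈ DRight cs K ∩ DLeft cs J, d₁ ≠ d₂ →
      Disjoint ((fun v => v * d₁) '' (WPar cs K ∩ DLeft cs (conjInter cs J K d₁)))
        ((fun v => v * d₂) '' (WPar cs K ∩ DLeft cs (conjInter cs J K d₂)))) := by
  refine ⟨Set.ext fun w => ⟨fun hw => ?_, ?_⟩, ?_⟩
  · obtain ⟨u, hu, d, hd, rfl, -⟩ := cs.exists_mul_mem_DRight K w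
    exact Set.mem_biUnion ⟨hd, cs.mem_DLeft_of_mul_mem_DLeft hu hd hw⟩
      ⟨u, ⟨hu, cs.mem_DLeft_conjInter_of_mul_mem_DLeft hu hd hw⟩, rfl⟩
  · simp only [Set.mem_iUnion]
    rintro ⟨d, ⟨hdK, hdJ⟩, v, ⟨hv, hvd⟩, rfl⟩
    exact cs.mul_mem_DLeft hdK hdJ hv hvd
  · rintro d₁ ⟨hd₁, -⟩ d₂ ⟨hd₂, -⟩ hne
    refine Set.disjoint_left.2 ?_
    rintro _ ⟨v₁, ⟨hv₁, -⟩, rfl⟩ ⟨v₂, ⟨hv₂, -⟩, h⟩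
    exact hne (cs.eq_of_mul_eq_mul_of_mem_DRight hv₁ hv₂ hd₁ hd₂ h.symm)

end
end

section
/- With the endomorphisms φ_s, φ_t of the free ℤ[q,q⁻¹]-module on basis v₁,...,v_{k+1} defined as in the path-graph W-graph construction (φ_r multiplies v_i by -q⁻¹ when v_i has colour r, and otherwise sends v_i to q v_i plus the sum of its neighbours; vertex v_i has colour s if i is odd and colour t if i is even), the alternating products [..φ_sφ_t]_n and [..φ_tφ_s]_n (each with n factors, defined by [..xy]_n = (xy)^{n/2} for n even and y(xy)^{(n-1)/2} for n odd) are equal if and only if k+2 divides n. -/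
open LaurentPolynomial

/-- Matrix of `φ_s` on the path-graph `W`-graph with vertices `v₁, ..., v_{k+1}`
(1-based index `i+1` for `i : Fin (k+1)`): `φ_s` multiplies `v_i` by `-q⁻¹` when `i` is
odd (colour `s`), and sends `v_i` to `q v_i + v_{i-1} + v_{i+1}` when `i` is even. -/
noncomputable def pathPhiS (k : ℕ) : Matrix (Fin (k + 1)) (Fin (k + 1)) (LaurentPolynomial ℤ) :=
  fun j i =>
    if Even (i : ℕ) then (if j = i then -T (-1) else 0)
    else (if j = i then T 1 else if (j : ℕ) + 1 = (i : ℕ) ∨ (i : ℕ) + 1 = (j : ℕ) then 1 else 0)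

/-- Matrix of `φ_t`: multiplies `v_i` by `-q⁻¹` when `i` is even (colour `t`), and sends
`v_i` to `q v_i + v_{i-1} + v_{i+1}` when `i` is odd. -/
noncomputable def pathPhiT (k : ℕ) : Matrix (Fin (k + 1)) (Fin (k + 1)) (LaurentPolynomial ℤ) :=
  fun j i =>
    if ¬ Even (i : ℕ) then (if j = i then -T (-1) else 0)
    else (if j = i then T 1 else if (j : ℕ) + 1 = (i : ℕ) ∨ (i : ℕ) + 1 = (j : ℕ) then 1 else 0)

/-- The alternating product `[..xy]_n` with `n` factors:
`(xy)^(n/2)` if `n` is even, `y(xy)^((n-1)/2)` if `n` is odd. -/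
def altProd {R : Type*} [Monoid R] (x y : R) (n : ℕ) : R :=
  if Even n then (x * y) ^ (n / 2) else y * (x * y) ^ (n / 2)

/-!
Number the vertices `0, …, k` and embed the path in `ℤ`. Column `i` of `[..φ_sφ_t]_r` is `r`
alternating steps applied to `v_i`. On `ℤ` these steps have an explicit kernel (`pathKernel`);
subtracting its translates started at the mirror images of `i` in the boundary points `-1` and
`k + 1` gives a function that vanishes there as long as `r ≤ k + 2`, so it computes the column of
the finite product (`imageKernel`). A vertex fixed up to `-q⁻¹` by the first factor reduces to a
product of length `r - 1`.

Reading off the closed form, both products of length `k + 2` equal minus the antidiagonal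
permutation matrix, a unit, while for `0 < r < k + 2` their `(r - 1, 0)` entries are `q` and
`-q⁻¹`. In any monoid, a length `m` whose braid relation holds with a unit value and which is
minimal makes the braid relations hold exactly at the multiples of `m`.
-/

section AltProd

variable {M : Type*} [Monoid M] (x y : M)

@[simp]
lemma altProd_zero : altProd x y 0 = 1 := by
  simp [altProd]

lemma altProd_succ (r : ℕ) : altProd x y (r + 1) = (if Even r then y else x) * altProd x y r := by
  rcases Nat.even_or_odd r with hr | hr
  · have hdiv : (r + 1) / 2 = r / 2 := by rcases hr with ⟨t, rfl⟩; omega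
    simp [altProd, hr, Nat.even_add_one, hdiv]
  · have hdiv : (r + 1) / 2 = r / 2 + 1 := by rcases hr with ⟨t, rfl⟩; omega
    simp [altProd, Nat.not_even_iff_odd.mpr hr, Nat.even_add_one, hdiv, pow_succ', mul_assoc]

lemma altProd_add (a b : ℕ) :
    altProd x y (a + b) = (if Even b then altProd x y a else altProd y x a) * altProd x y b := by
  induction a with
  | zero => simp
  | succ a ih =>
    rw [Nat.add_right_comm, altProd_succ, ih, altProd_succ x y a, altProd_succ y x a]
    by_cases ha : Even a <;> by_cases hb : Even b <;> simp [ha, hb, Nat.even_add, mul_assoc]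

lemma altProd_succ_eq_mul (r : ℕ) : altProd x y (r + 1) = altProd y x r * y := by
  simpa [altProd] using altProd_add x y r 1

lemma altProd_mul_eq_pow {m : ℕ} (h : altProd x y m = altProd y x m) (l : ℕ) :
    altProd x y (m * l) = altProd x y m ^ l := by
  induction l with
  | zero => simp
  | succ l ih => rw [Nat.mul_succ, add_comm, altProd_add, ← h, ite_self, ih, pow_succ']

theorem altProd_eq_altProd_iff_dvd {m : ℕ} (hm : 0 < m) (hbraid : altProd x y m = altProd y x m)
    (hunit : IsUnit (altProd x y m)) (hmin : ∀ r, 0 < r → r < m → altProd x y r ≠ altProd y x r)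
    (n : ℕ) : altProd x y n = altProd y x n ↔ m ∣ n := by
  constructor
  · intro h
    rw [← Nat.mod_add_div n m, altProd_add, altProd_add, altProd_mul_eq_pow x y hbraid,
      altProd_mul_eq_pow y x hbraid.symm, ← hbraid] at h
    have hrem : altProd x y (n % m) = altProd y x (n % m) := by
      have := (hunit.pow (n / m)).mul_right_cancel h
      split_ifs at this
      · exact this
      · exact this.symm
    by_contra hdvd
    exact hmin _ (Nat.pos_of_ne_zero (mt Nat.dvd_of_mod_eq_zero hdvd)) (Nat.mod_lt n hm) hrem
  · rintro ⟨l, rfl⟩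
    rw [altProd_mul_eq_pow x y hbraid, altProd_mul_eq_pow y x hbraid.symm, hbraid]

end AltProd

open Matrix

noncomputable def pathPhi (k c : ℕ) : Matrix (Fin (k + 1)) (Fin (k + 1)) ℤ[T;T⁻¹] :=
  fun j i =>
    if Even ((i : ℕ) + c) then (if j = i then -T (-1) else 0)
    else (if j = i then T 1 else if (j : ℕ) + 1 = (i : ℕ) ∨ (i : ℕ) + 1 = (j : ℕ) then 1 else 0)

lemma pathPhi_eq_of_even_add {k c c' : ℕ} (h : Even (c + c')) : pathPhi k c = pathPhi k c' := by
  funext j i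
  have hpar : Even ((i : ℕ) + c) ↔ Even ((i : ℕ) + c') := by
    simp only [Nat.even_iff] at h ⊢; omega
  simp only [pathPhi, hpar]

lemma pathPhiS_eq_pathPhi {k c : ℕ} (hc : Even c) : pathPhiS k = pathPhi k c :=
  pathPhi_eq_of_even_add (k := k) (c := 0) (by simpa using hc)

lemma pathPhiT_eq_pathPhi {k c : ℕ} (hc : ¬Even c) : pathPhiT k = pathPhi k c := by
  rw [pathPhi_eq_of_even_add (c := c) (c' := 1) (by simpa [Nat.even_add_one] using hc)]
  funext j i
  simp only [pathPhiT, pathPhi, Nat.even_add_one]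

noncomputable def pathStep (c : ℕ) (f : ℤ → ℤ[T;T⁻¹]) (j : ℤ) : ℤ[T;T⁻¹] :=
  if Even (j + c) then -T (-1) * f j + f (j - 1) + f (j + 1) else T 1 * f j

lemma pathStep_sub (c : ℕ) (f g : ℤ → ℤ[T;T⁻¹]) :
    pathStep c (f - g) = pathStep c f - pathStep c g := by
  funext j
  simp only [pathStep, Pi.sub_apply]
  split_ifs <;> ring

lemma pathStep_comp_sub {c c' : ℕ} {a : ℤ} (h : Even (a + c + c')) (f : ℤ → ℤ[T;T⁻¹]) :
    pathStep c (fun x => f (x - a)) = fun x => pathStep c' f (x - a) := by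
  funext x
  have hpar : Even (x + c) ↔ Even (x - a + c') := by
    simp only [Int.even_iff] at h ⊢; omega
  simp only [pathStep, hpar]
  rw [show x - 1 - a = x - a - 1 by ring, show x + 1 - a = x - a + 1 by ring]

lemma sum_fin_ite_cast_eq {M : Type*} [AddCommMonoid M] {k : ℕ} {x : ℤ} {a : M}
    (ha : a ≠ 0 → 0 ≤ x ∧ x ≤ k) :
    ∑ l : Fin (k + 1), (if ((l : ℕ) : ℤ) = x then a else 0) = a := by
  by_cases hx : 0 ≤ x ∧ x ≤ k
  · rw [Fintype.sum_eq_single ⟨x.toNat, by omega⟩ fun l hl => if_neg fun h => hl (Fin.ext ?_)]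
    · simp only [Int.toNat_of_nonneg hx.1, if_true]
    · simp only; omega
  · obtain rfl : a = 0 := by_contra fun h => hx (ha h)
    simp

lemma pathPhi_mul_apply {k : ℕ} (c : ℕ) (f : ℤ → ℤ[T;T⁻¹]) (j l : Fin (k + 1)) :
    pathPhi k c j l * f l =
      if Even ((j : ℤ) + c) then
        (if ((l : ℕ) : ℤ) = j then -T (-1) * f j else 0) +
        (if ((l : ℕ) : ℤ) = j - 1 then f (j - 1) else 0) +
        (if ((l : ℕ) : ℤ) = j + 1 then f (j + 1) else 0)
      else (if ((l : ℕ) : ℤ) = j then T 1 * f j else 0) := by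
  have hj := j.isLt
  have hl := l.isLt
  simp only [pathPhi, Fin.ext_iff, Nat.even_iff, Int.even_iff]
  split_ifs <;> grind

lemma pathPhi_mulVec {k : ℕ} (c : ℕ) {f : ℤ → ℤ[T;T⁻¹]} (h₀ : f (-1) = 0) (h₁ : f (k + 1) = 0) :
    pathPhi k c *ᵥ (fun l : Fin (k + 1) => f l) = fun j : Fin (k + 1) => pathStep c f j := by
  funext j
  have hj := j.isLt
  have hsupp : ∀ x : ℤ, -1 ≤ x → x ≤ k + 1 → f x ≠ 0 → 0 ≤ x ∧ x ≤ k := by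
    intro x hlo hhi hx
    by_contra hout
    obtain rfl | rfl : x = -1 ∨ x = k + 1 := by omega
    exacts [hx h₀, hx h₁]
  simp only [mulVec, dotProduct, pathPhi_mul_apply, pathStep]
  split_ifs
  · rw [Finset.sum_add_distrib, Finset.sum_add_distrib, sum_fin_ite_cast_eq fun _ => by omega,
      sum_fin_ite_cast_eq (hsupp _ (by omega) (by omega)),
      sum_fin_ite_cast_eq (hsupp _ (by omega) (by omega))]
  · exact sum_fin_ite_cast_eq fun _ => by omega

lemma T_neg_one_mul_T_one : (T (-1) * T 1 : ℤ[T;T⁻¹]) = 1 := by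
  rw [← T_add, neg_add_cancel, T_zero]

/-- The entry at displacement `d` of `r` alternating steps on the infinite path, started at a
vertex that the first step does not fix up to scalar. -/
noncomputable def pathKernel (r : ℕ) (d : ℤ) : ℤ[T;T⁻¹] :=
  if d.natAbs ≤ r then (if Even (d + r) then 1 else T 1) else 0

lemma pathKernel_eq_zero {r : ℕ} {d : ℤ} (h : r < d.natAbs) : pathKernel r d = 0 :=
  if_neg (by omega)

lemma pathKernel_neg (r : ℕ) (d : ℤ) : pathKernel r (-d) = pathKernel r d := by
  simp [pathKernel, Int.even_add]

lemma pathKernel_succ (r : ℕ) : pathKernel (r + 1) = pathStep (r + 1) (pathKernel r) := by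
  funext d
  have := T_neg_one_mul_T_one
  simp only [pathKernel, pathStep]
  split_ifs <;> grind

/-- `-2 - i` and `2k + 2 - i` are the mirror images of `i` in the boundary points `-1` and `k + 1`;
for `r ≤ k + 2` no further images are needed. -/
noncomputable def imageKernel (k r : ℕ) (i x : ℤ) : ℤ[T;T⁻¹] :=
  pathKernel r (x - i) - pathKernel r (x - (-2 - i)) - pathKernel r (x - (2 * k + 2 - i))

lemma imageKernel_succ {k c : ℕ} {i : ℤ} (hi : ¬Even (i + c)) (r : ℕ) :
    pathStep (c + r) (imageKernel k r i) = imageKernel k (r + 1) i := by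
  have hpar : ∀ a : ℤ, Even (a + i) → Even (a + ↑(c + r) + ↑(r + 1)) := by
    intro a ha
    simp only [Int.even_iff] at hi ha ⊢
    omega
  have hsplit : imageKernel k r i = (fun x => pathKernel r (x - i)) -
      (fun x => pathKernel r (x - (-2 - i))) - (fun x => pathKernel r (x - (2 * k + 2 - i))) := rfl
  rw [hsplit, pathStep_sub, pathStep_sub, pathStep_comp_sub (hpar i ⟨i, rfl⟩),
    pathStep_comp_sub (hpar (-2 - i) ⟨-1, by ring⟩),
    pathStep_comp_sub (hpar (2 * k + 2 - i) ⟨k + 1, by ring⟩), ← pathKernel_succ]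
  rfl

lemma imageKernel_apply_neg_one {k r : ℕ} (hr : r ≤ k + 2) {i : ℤ} (hik : i ≤ k) :
    imageKernel k r i (-1) = 0 := by
  rw [imageKernel, pathKernel_eq_zero (d := -1 - (2 * k + 2 - i)) (by omega),
    show -1 - i = -(-1 - (-2 - i)) by ring, pathKernel_neg, sub_self, sub_zero]

lemma imageKernel_apply_add_one {k r : ℕ} (hr : r ≤ k + 2) {i : ℤ} (hi₀ : 0 ≤ i) :
    imageKernel k r i (k + 1) = 0 := by
  rw [imageKernel, pathKernel_eq_zero (d := k + 1 - (-2 - i)) (by omega),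
    show (k : ℤ) + 1 - i = -(k + 1 - (2 * k + 2 - i)) by ring, pathKernel_neg, sub_zero, sub_self]

lemma imageKernel_add_two {k : ℕ} {i j : ℤ} (hi₀ : 0 ≤ i) (hik : i ≤ k) (hj₀ : 0 ≤ j)
    (hjk : j ≤ k) : imageKernel k (k + 2) i j = if i + j = k then -1 else 0 := by
  simp only [imageKernel, pathKernel]
  split_ifs <;> grind

lemma imageKernel_add_one {k : ℕ} {i j : ℤ} (hi₀ : 0 ≤ i) (hik : i ≤ k) (hj₀ : 0 ≤ j)
    (hjk : j ≤ k) : imageKernel k (k + 1) i j = if i + j = k then T 1 else 0 := by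
  simp only [imageKernel, pathKernel]
  split_ifs <;> grind

lemma imageKernel_zero_self {k r : ℕ} (hr : r ≤ k) : imageKernel k r 0 r = 1 := by
  simp only [imageKernel, pathKernel]
  split_ifs <;> grind

lemma imageKernel_succ_zero_self {k r : ℕ} (hr : r ≤ k) : imageKernel k (r + 1) 0 r = T 1 := by
  simp only [imageKernel, pathKernel]
  split_ifs <;> grind

lemma altProd_pathPhi_succ (k c r : ℕ) :
    altProd (pathPhi k (c + 1)) (pathPhi k c) (r + 1) =
      pathPhi k (c + r) * altProd (pathPhi k (c + 1)) (pathPhi k c) r := by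
  rw [altProd_succ]
  congr 1
  split_ifs with hr <;> apply pathPhi_eq_of_even_add <;> simp only [Nat.even_iff] at hr ⊢ <;> omega

lemma altProd_pathPhi_apply_of_not_even {k c r : ℕ} (hr : r ≤ k + 2) {i : Fin (k + 1)}
    (hi : ¬Even ((i : ℕ) + c)) (j : Fin (k + 1)) :
    altProd (pathPhi k (c + 1)) (pathPhi k c) r j i = imageKernel k r i j := by
  induction r generalizing j with
  | zero =>
    simp only [altProd_zero, one_apply, imageKernel, pathKernel, Fin.ext_iff]
    split_ifs <;> grind
  | succ r ih =>
    have hcol : (fun l => altProd (pathPhi k (c + 1)) (pathPhi k c) r l i) =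
        fun l : Fin (k + 1) => imageKernel k r i l := funext (ih (by omega))
    have hi' : ¬Even ((i : ℤ) + c) := by simpa [← Int.even_coe_nat] using hi
    have hmul : (pathPhi k (c + r) * altProd (pathPhi k (c + 1)) (pathPhi k c) r) j i =
        (pathPhi k (c + r) *ᵥ fun l => altProd (pathPhi k (c + 1)) (pathPhi k c) r l i) j := rfl
    rw [altProd_pathPhi_succ, hmul, hcol,
      pathPhi_mulVec _ (imageKernel_apply_neg_one (by omega) (by omega))
        (imageKernel_apply_add_one (by omega) (by omega)), imageKernel_succ hi']

lemma altProd_pathPhi_succ_apply_of_even {k c r : ℕ} (hr : r ≤ k + 1) {i : Fin (k + 1)}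
    (hi : Even ((i : ℕ) + c)) (j : Fin (k + 1)) :
    altProd (pathPhi k (c + 1)) (pathPhi k c) (r + 1) j i = -T (-1) * imageKernel k r i j := by
  have hswap : altProd (pathPhi k c) (pathPhi k (c + 1)) r =
      altProd (pathPhi k (c + 1 + 1)) (pathPhi k (c + 1)) r := by
    rw [pathPhi_eq_of_even_add (c := c) (c' := c + 1 + 1) ⟨c + 1, by ring⟩]
  have hi' : ¬Even ((i : ℕ) + (c + 1)) := by simpa [← add_assoc, Nat.even_add_one] using hi
  rw [altProd_succ_eq_mul, Matrix.mul_apply, hswap]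
  simp only [pathPhi, hi, if_true, mul_ite, mul_zero, Finset.sum_ite_eq', Finset.mem_univ]
  rw [altProd_pathPhi_apply_of_not_even (by omega) hi', mul_comm]

lemma revPerm_permMatrix_apply {k : ℕ} (j i : Fin (k + 1)) :
    (Fin.revPerm.permMatrix ℤ[T;T⁻¹]) j i = if ((i : ℕ) : ℤ) + (j : ℕ) = k then 1 else 0 := by
  simp only [PEquiv.toMatrix_apply, Equiv.toPEquiv_apply, Fin.revPerm_apply, Option.mem_def,
    Option.some.injEq, Fin.ext_iff, Fin.val_rev, Nat.reduceSubDiff]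
  exact if_congr (by omega) rfl rfl

lemma altProd_pathPhi_add_two (k c : ℕ) :
    altProd (pathPhi k (c + 1)) (pathPhi k c) (k + 2) = -Fin.revPerm.permMatrix ℤ[T;T⁻¹] := by
  funext j i
  have hi := i.isLt
  have hj := j.isLt
  rw [Matrix.neg_apply, revPerm_permMatrix_apply]
  by_cases hic : Even ((i : ℕ) + c)
  · rw [altProd_pathPhi_succ_apply_of_even le_rfl hic, imageKernel_add_one (by omega)
      (by omega) (by omega) (by omega)]
    split_ifs
    · rw [neg_mul, T_neg_one_mul_T_one]
    · simp
  · rw [altProd_pathPhi_apply_of_not_even le_rfl hic, imageKernel_add_two (by omega) (by omega)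
      (by omega) (by omega)]
    split_ifs <;> simp

lemma altProd_pathPhiS_pathPhiT (k r : ℕ) :
    altProd (pathPhiS k) (pathPhiT k) r = altProd (pathPhi k (1 + 1)) (pathPhi k 1) r := by
  rw [pathPhiS_eq_pathPhi (c := 1 + 1) (by decide), pathPhiT_eq_pathPhi (c := 1) (by decide)]

lemma altProd_pathPhiT_pathPhiS (k r : ℕ) :
    altProd (pathPhiT k) (pathPhiS k) r = altProd (pathPhi k (0 + 1)) (pathPhi k 0) r := by
  rw [pathPhiS_eq_pathPhi (c := 0) (by decide), pathPhiT_eq_pathPhi (c := 0 + 1) (by decide)]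

lemma T_one_ne_neg_T_neg_one : (T 1 : ℤ[T;T⁻¹]) ≠ -T (-1) := by
  intro h
  have := congrArg (fun p : ℤ[T;T⁻¹] => p.coeff 1) h
  simp at this

lemma altProd_pathPhiS_pathPhiT_ne {k r : ℕ} (hr : r ≤ k) :
    altProd (pathPhiS k) (pathPhiT k) (r + 1) ≠ altProd (pathPhiT k) (pathPhiS k) (r + 1) := by
  intro h
  have hentry := congrArg (fun M => M ⟨r, by omega⟩ 0) h
  simp only [altProd_pathPhiS_pathPhiT, altProd_pathPhiT_pathPhiS] at hentry
  rw [altProd_pathPhi_apply_of_not_even (by omega) (by simp),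
    altProd_pathPhi_succ_apply_of_even (by omega) (by simp)] at hentry
  simp only [Fin.val_zero, Nat.cast_zero] at hentry
  rw [imageKernel_succ_zero_self hr, imageKernel_zero_self hr, mul_one] at hentry
  exact T_one_ne_neg_T_neg_one hentry

/-- `[..φ_sφ_t]_n = [..φ_tφ_s]_n` if and only if `k + 2` divides `n`. -/
theorem pathPhi_braid_iff (k n : ℕ) :
    altProd (pathPhiS k) (pathPhiT k) n = altProd (pathPhiT k) (pathPhiS k) n ↔
      (k + 2) ∣ n := by
  have hST := altProd_pathPhiS_pathPhiT k (k + 2)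
  have hTS := altProd_pathPhiT_pathPhiS k (k + 2)
  rw [altProd_pathPhi_add_two] at hST hTS
  refine altProd_eq_altProd_iff_dvd _ _ (Nat.succ_pos _) (hST.trans hTS.symm) ?_ ?_ n
  · rw [hST]
    simpa using ((Group.isUnit Fin.revPerm⁻¹).map (permMatrixHom (R := ℤ[T;T⁻¹]))).neg
  · intro r hr₀ hr
    obtain ⟨r, rfl⟩ : ∃ r', r = r' + 1 := ⟨r - 1, by omega⟩
    exact altProd_pathPhiS_pathPhiT_ne (by omega)
end
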